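/- The first variation of the volume element satisfies, at every point of U: d/dt at t=0 of (R(t) · (R(t)_α × R(t)_β)) equals (3·v_n + div X) · A₁A₂, where X is the tangential field X = −v_n·(r − (r·N)·N) + (r·N)·η. -/

import Mathlib

noncomputable section

/-- Vectors in ℝ³. -/
abbrev V3 : Type := Fin 3 → ℝ

/-- Euclidean dot product on ℝ³. -/
def dot3 (a b : V3) : ℝ := a 0 * b 0 + a 1 * b 1 + a 2 * b 2

/-- Cross product on ℝ³. -/
def cross3 (a b : V3) : V3 :=
  ![a 1 * b 2 - a 2 * b 1, a 2 * b 0 - a 0 * b 2, a 0 * b 1 - a 1 * b 0]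

/-- Euclidean norm on ℝ³. -/
def norm3 (a : V3) : ℝ := Real.sqrt (dot3 a a)

/-- Partial derivative in the first (α) direction. -/
def pd1 {E : Type*} [NormedAddCommGroup E] [NormedSpace ℝ E]
    (f : ℝ × ℝ → E) (x : ℝ × ℝ) : E := fderiv ℝ f x (1, 0)

/-- Partial derivative in the second (β) direction. -/
def pd2 {E : Type*} [NormedAddCommGroup E] [NormedSpace ℝ E]
    (f : ℝ × ℝ → E) (x : ℝ × ℝ) : E := fderiv ℝ f x (0, 1)

def A₁ (r : ℝ × ℝ → V3) (x : ℝ × ℝ) : ℝ := norm3 (pd1 r x)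
def A₂ (r : ℝ × ℝ → V3) (x : ℝ × ℝ) : ℝ := norm3 (pd2 r x)
def e₁ (r : ℝ × ℝ → V3) (x : ℝ × ℝ) : V3 := (A₁ r x)⁻¹ • pd1 r x
def e₂ (r : ℝ × ℝ → V3) (x : ℝ × ℝ) : V3 := (A₂ r x)⁻¹ • pd2 r x
/-- Unit normal N = e₁ × e₂. -/
def NN (r : ℝ × ℝ → V3) (x : ℝ × ℝ) : V3 := cross3 (e₁ r x) (e₂ r x)
/-- p = (A₁)_β / A₂. -/
def pp (r : ℝ × ℝ → V3) (x : ℝ × ℝ) : ℝ := pd2 (A₁ r) x / A₂ r x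
/-- q = (A₂)_α / A₁. -/
def qq (r : ℝ × ℝ → V3) (x : ℝ × ℝ) : ℝ := pd1 (A₂ r) x / A₁ r x
/-- H∘ = −κ₁ A₁. -/
def Ho (r : ℝ × ℝ → V3) (κ₁ : ℝ × ℝ → ℝ) (x : ℝ × ℝ) : ℝ := -κ₁ x * A₁ r x
/-- K∘ = −κ₂ A₂. -/
def Ko (r : ℝ × ℝ → V3) (κ₂ : ℝ × ℝ → ℝ) (x : ℝ × ℝ) : ℝ := -κ₂ x * A₂ r x

/-- Surface divergence of the tangential field f₁·e₁ + f₂·e₂. -/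
def sdiv (r : ℝ × ℝ → V3) (f₁ f₂ : ℝ × ℝ → ℝ) (x : ℝ × ℝ) : ℝ :=
  (pd1 (fun y => f₁ y * A₂ r y) x + pd2 (fun y => f₂ y * A₁ r y) x) / (A₁ r x * A₂ r x)

/-- Surface gradient ∇f = (f_α/A₁)·e₁ + (f_β/A₂)·e₂. -/
def sgrad (r : ℝ × ℝ → V3) (f : ℝ × ℝ → ℝ) (x : ℝ × ℝ) : V3 :=
  (pd1 f x / A₁ r x) • e₁ r x + (pd2 f x / A₂ r x) • e₂ r x


/-- Variation vector field V = v₁·e₁ + v₂·e₂ + v_n·N. -/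
def Vfield (r : ℝ × ℝ → V3) (v₁ v₂ v_n : ℝ × ℝ → ℝ) (y : ℝ × ℝ) : V3 :=
  v₁ y • e₁ r y + v₂ y • e₂ r y + v_n y • NN r y

/-- The deformed surface R(t) = r + t·V. -/
def Rt (r Vf : ℝ × ℝ → V3) (t : ℝ) (y : ℝ × ℝ) : V3 := r y + t • Vf y

/-- Infinitesimal strain ε̄₁ = ((v₁)_α + p v₂ + H∘ v_n)/A₁. -/
def eps1 (r : ℝ × ℝ → V3) (κ₁ : ℝ × ℝ → ℝ) (v₁ v₂ v_n : ℝ × ℝ → ℝ) (x : ℝ × ℝ) : ℝ :=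
  (pd1 v₁ x + pp r x * v₂ x + Ho r κ₁ x * v_n x) / A₁ r x

/-- Infinitesimal strain ε̄₂ = ((v₂)_β + q v₁ + K∘ v_n)/A₂. -/
def eps2 (r : ℝ × ℝ → V3) (κ₂ : ℝ × ℝ → ℝ) (v₁ v₂ v_n : ℝ × ℝ → ℝ) (x : ℝ × ℝ) : ℝ :=
  (pd2 v₂ x + qq r x * v₁ x + Ko r κ₂ x * v_n x) / A₂ r x

/-- Infinitesimal rotation ϑ̄ = (−(v_n)_α + H∘ v₁)/A₁. -/
def thb (r : ℝ × ℝ → V3) (κ₁ : ℝ × ℝ → ℝ) (v₁ v_n : ℝ × ℝ → ℝ) (x : ℝ × ℝ) : ℝ :=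
  (-(pd1 v_n x) + Ho r κ₁ x * v₁ x) / A₁ r x

/-- Infinitesimal rotation ψ̄ = (−(v_n)_β + K∘ v₂)/A₂. -/
def psb (r : ℝ × ℝ → V3) (κ₂ : ℝ × ℝ → ℝ) (v₂ v_n : ℝ × ℝ → ℝ) (x : ℝ × ℝ) : ℝ :=
  (-(pd2 v_n x) + Ko r κ₂ x * v₂ x) / A₂ r x

/-- Shear ω₁ = (v_α − p u)/A₁. -/
def om1 (r : ℝ × ℝ → V3) (u v : ℝ × ℝ → ℝ) (x : ℝ × ℝ) : ℝ :=
  (pd1 v x - pp r x * u x) / A₁ r x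

/-- Shear ω₂ = (u_β − q v)/A₂. -/
def om2 (r : ℝ × ℝ → V3) (u v : ℝ × ℝ → ℝ) (x : ℝ × ℝ) : ℝ :=
  (pd2 u x - qq r x * v x) / A₂ r x

/-- First fundamental form coefficient E. -/
def EE (R : ℝ × ℝ → V3) (x : ℝ × ℝ) : ℝ := dot3 (pd1 R x) (pd1 R x)
/-- First fundamental form coefficient F. -/
def FF (R : ℝ × ℝ → V3) (x : ℝ × ℝ) : ℝ := dot3 (pd1 R x) (pd2 R x)
/-- First fundamental form coefficient G. -/
def GG (R : ℝ × ℝ → V3) (x : ℝ × ℝ) : ℝ := dot3 (pd2 R x) (pd2 R x)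
/-- Unit normal of a parametrized surface. -/
def unitN (R : ℝ × ℝ → V3) (x : ℝ × ℝ) : V3 :=
  (norm3 (cross3 (pd1 R x) (pd2 R x)))⁻¹ • cross3 (pd1 R x) (pd2 R x)
/-- Second fundamental form coefficient e = N·R_αα. -/
def ee (R : ℝ × ℝ → V3) (x : ℝ × ℝ) : ℝ := dot3 (unitN R x) (pd1 (pd1 R) x)
/-- Second fundamental form coefficient f = N·R_αβ. -/
def ff (R : ℝ × ℝ → V3) (x : ℝ × ℝ) : ℝ := dot3 (unitN R x) (pd2 (pd1 R) x)
/-- Second fundamental form coefficient g = N·R_ββ. -/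
def gg (R : ℝ × ℝ → V3) (x : ℝ × ℝ) : ℝ := dot3 (unitN R x) (pd2 (pd2 R) x)
/-- Mean curvature H = (eG − 2fF + gE)/(2(EG − F²)). -/
def meanH (R : ℝ × ℝ → V3) (x : ℝ × ℝ) : ℝ :=
  (ee R x * GG R x - 2 * ff R x * FF R x + gg R x * EE R x) /
    (2 * (EE R x * GG R x - FF R x ^ 2))
/-- κ̃₁ = −(N_α·R_α)/‖R_α‖². -/
def princ1 (R : ℝ × ℝ → V3) (x : ℝ × ℝ) : ℝ :=
  -(dot3 (pd1 (unitN R) x) (pd1 R x)) / (norm3 (pd1 R x)) ^ 2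
/-- κ̃₂ = −(N_β·R_β)/‖R_β‖². -/
def princ2 (R : ℝ × ℝ → V3) (x : ℝ × ℝ) : ℝ :=
  -(dot3 (pd2 (unitN R) x) (pd2 R x)) / (norm3 (pd2 R x)) ^ 2

/-- Linear Weingarten functional integrand (a·H + b)·dA + (c/3)·R·(R_α × R_β). -/
def Phi (a b c : ℝ) (R : ℝ × ℝ → V3) (x : ℝ × ℝ) : ℝ :=
  (a * meanH R x + b) * norm3 (cross3 (pd1 R x) (pd2 R x)) +
    c / 3 * dot3 (R x) (cross3 (pd1 R x) (pd2 R x))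


/-! ### Auxiliary lemmas -/

@[simp] lemma cross3_c0 (a b : V3) : cross3 a b 0 = a 1 * b 2 - a 2 * b 1 := rfl
@[simp] lemma cross3_c1 (a b : V3) : cross3 a b 1 = a 2 * b 0 - a 0 * b 2 := rfl
@[simp] lemma cross3_c2 (a b : V3) : cross3 a b 2 = a 0 * b 1 - a 1 * b 0 := rfl
@[simp] lemma dot3_zero_right (c : V3) : dot3 c 0 = 0 := by simp [dot3]

lemma dot3_smul_right (c : V3) (s : ℝ) (u : V3) : dot3 c (s • u) = s * dot3 c u := by
  simp [dot3]; ring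
lemma dot3_smul_left (s : ℝ) (u c : V3) : dot3 (s • u) c = s * dot3 u c := by
  simp [dot3]; ring
lemma dot3_add_right (c u v : V3) : dot3 c (u + v) = dot3 c u + dot3 c v := by
  simp [dot3]; ring
lemma dot3_add_left (u v c : V3) : dot3 (u + v) c = dot3 u c + dot3 v c := by
  simp [dot3]; ring
lemma dot3_sub_right (c u v : V3) : dot3 c (u - v) = dot3 c u - dot3 c v := by
  simp [dot3]; ring
lemma cross3_smul_left (s : ℝ) (u v : V3) : cross3 (s • u) v = s • cross3 u v := by
  funext i; fin_cases i <;> simp <;> ring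
lemma cross3_smul_right (s : ℝ) (u v : V3) : cross3 u (s • v) = s • cross3 u v := by
  funext i; fin_cases i <;> simp <;> ring
lemma cross3_add_left (u v w : V3) : cross3 (u + v) w = cross3 u w + cross3 v w := by
  funext i; fin_cases i <;> simp <;> ring
lemma cross3_add_right (u v w : V3) : cross3 u (v + w) = cross3 u v + cross3 u w := by
  funext i; fin_cases i <;> simp <;> ring
lemma cross3_self (v : V3) : cross3 v v = 0 := by
  funext i; fin_cases i <;> simp <;> ring
lemma cross_cross_left (a b : V3) : cross3 (cross3 a b) b = dot3 a b • b - dot3 b b • a := by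
  funext i; fin_cases i <;> simp [dot3] <;> ring
lemma cross_cross_right (a b : V3) : cross3 a (cross3 a b) = dot3 a b • a - dot3 a a • b := by
  funext i; fin_cases i <;> simp [dot3] <;> ring
lemma dot3_cross_self (a b : V3) : dot3 (cross3 a b) (cross3 a b) =
    dot3 a a * dot3 b b - dot3 a b ^ 2 := by
  simp [dot3]; ring
lemma dot3_cross_left (a b : V3) : dot3 a (cross3 a b) = 0 := by simp [dot3]; ring
lemma dot3_cross_right (a b : V3) : dot3 b (cross3 a b) = 0 := by simp [dot3]; ring
lemma triple_swap1 (a w b : V3) : dot3 a (cross3 w b) = - dot3 w (cross3 a b) := by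
  simp [dot3]; ring
lemma triple_swap2 (a w b : V3) : dot3 b (cross3 a w) = - dot3 w (cross3 a b) := by
  simp [dot3]; ring
lemma triple_antisym (c w m : V3) : dot3 c (cross3 m w) = - dot3 c (cross3 w m) := by
  simp [dot3]; ring

lemma alg1 (c a b : V3) (v1 v2 vn A B : ℝ) (hA : A ≠ 0) (hB : B ≠ 0)
    (hAsq : A ^ 2 = dot3 a a) (hBsq : B ^ 2 = dot3 b b) (hab : dot3 a b = 0) :
    (-vn * dot3 c (A⁻¹ • a) + dot3 c (cross3 (A⁻¹ • a) (B⁻¹ • b)) * v1) * B =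
      dot3 c (cross3 (v1 • (A⁻¹ • a) + v2 • (B⁻¹ • b) + vn • cross3 (A⁻¹ • a) (B⁻¹ • b)) b) := by
  simp only [cross3_smul_left, cross3_smul_right, cross3_add_left, cross3_self,
    cross_cross_left, smul_zero, dot3_add_right, dot3_smul_right, dot3_sub_right,
    dot3_smul_left, smul_smul, hab, dot3_zero_right, ← hBsq]
  field_simp
  ring

lemma alg2 (c a b : V3) (v1 v2 vn A B : ℝ) (hA : A ≠ 0) (hB : B ≠ 0)
    (hAsq : A ^ 2 = dot3 a a) (hBsq : B ^ 2 = dot3 b b) (hab : dot3 a b = 0) :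
    (-vn * dot3 c (B⁻¹ • b) + dot3 c (cross3 (A⁻¹ • a) (B⁻¹ • b)) * v2) * A =
      dot3 c (cross3 a (v1 • (A⁻¹ • a) + v2 • (B⁻¹ • b) + vn • cross3 (A⁻¹ • a) (B⁻¹ • b))) := by
  simp only [cross3_smul_left, cross3_smul_right, cross3_add_right, cross3_self,
    cross_cross_right, smul_zero, dot3_add_right, dot3_smul_right, dot3_sub_right,
    dot3_smul_left, smul_smul, hab, dot3_zero_right, ← hAsq]
  field_simp
  ring

lemma alg3 (a b : V3) (v1 v2 vn A B : ℝ) (hA : A ≠ 0) (hB : B ≠ 0)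
    (hAsq : A ^ 2 = dot3 a a) (hBsq : B ^ 2 = dot3 b b) (hab : dot3 a b = 0) :
    dot3 (v1 • (A⁻¹ • a) + v2 • (B⁻¹ • b) + vn • cross3 (A⁻¹ • a) (B⁻¹ • b)) (cross3 a b) =
      vn * (A * B) := by
  simp only [cross3_smul_left, cross3_smul_right, dot3_add_left, dot3_smul_left, smul_smul,
    dot3_cross_left, dot3_cross_right, dot3_cross_self, hab, ← hAsq, ← hBsq]
  field_simp
  ring

lemma dot3_self_pos {a : V3} (ha : a ≠ 0) : 0 < dot3 a a := by
  rcases lt_or_eq_of_le (by positivity : (0:ℝ) ≤ a 0 ^ 2 + a 1 ^ 2 + a 2 ^ 2) with h | h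
  · simpa [dot3, sq] using h
  · exfalso; apply ha
    funext i
    fin_cases i
    · show a 0 = (0:ℝ); nlinarith [sq_nonneg (a 0), sq_nonneg (a 1), sq_nonneg (a 2)]
    · show a 1 = (0:ℝ); nlinarith [sq_nonneg (a 0), sq_nonneg (a 1), sq_nonneg (a 2)]
    · show a 2 = (0:ℝ); nlinarith [sq_nonneg (a 0), sq_nonneg (a 1), sq_nonneg (a 2)]

lemma diffAt_comp3 {f : ℝ × ℝ → V3} {x : ℝ × ℝ} (hf : DifferentiableAt ℝ f x) (i : Fin 3) :
    DifferentiableAt ℝ (fun y => f y i) x := differentiableAt_pi.1 hf i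

lemma pd_comp3 (v : ℝ × ℝ) {f : ℝ × ℝ → V3} {x : ℝ × ℝ} (hf : DifferentiableAt ℝ f x)
    (i : Fin 3) : fderiv ℝ (fun y => f y i) x v = fderiv ℝ f x v i := by
  have h : (fun y => f y i) =
      (ContinuousLinearMap.proj (R := ℝ) (φ := fun _ : Fin 3 => ℝ) i) ∘ f := rfl
  rw [h, fderiv_comp x (ContinuousLinearMap.differentiableAt _) hf]
  simp

lemma pdv_add (v : ℝ × ℝ) {u w : ℝ × ℝ → ℝ} {x : ℝ × ℝ}
    (hu : DifferentiableAt ℝ u x) (hw : DifferentiableAt ℝ w x) :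
    fderiv ℝ (fun y => u y + w y) x v = fderiv ℝ u x v + fderiv ℝ w x v := by
  rw [fderiv_fun_add hu hw]; rfl

lemma pdv_sub (v : ℝ × ℝ) {u w : ℝ × ℝ → ℝ} {x : ℝ × ℝ}
    (hu : DifferentiableAt ℝ u x) (hw : DifferentiableAt ℝ w x) :
    fderiv ℝ (fun y => u y - w y) x v = fderiv ℝ u x v - fderiv ℝ w x v := by
  rw [fderiv_fun_sub hu hw]; rfl

lemma pdv_mul (v : ℝ × ℝ) {u w : ℝ × ℝ → ℝ} {x : ℝ × ℝ}
    (hu : DifferentiableAt ℝ u x) (hw : DifferentiableAt ℝ w x) :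
    fderiv ℝ (fun y => u y * w y) x v = fderiv ℝ u x v * w x + u x * fderiv ℝ w x v := by
  rw [fderiv_fun_mul hu hw]; simp; ring

lemma pdv_mul3 (v : ℝ × ℝ) {u w z : ℝ × ℝ → ℝ} {x : ℝ × ℝ}
    (hu : DifferentiableAt ℝ u x) (hw : DifferentiableAt ℝ w x) (hz : DifferentiableAt ℝ z x) :
    fderiv ℝ (fun y => u y * w y * z y) x v =
      fderiv ℝ u x v * w x * z x + u x * fderiv ℝ w x v * z x + u x * w x * fderiv ℝ z x v := by
  rw [pdv_mul v (u := fun y => u y * w y) (hu.mul hw) hz, pdv_mul v hu hw]; ring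

lemma pdv_dotcross (v : ℝ × ℝ) {f g h : ℝ × ℝ → V3} {x : ℝ × ℝ}
    (hf : DifferentiableAt ℝ f x) (hg : DifferentiableAt ℝ g x) (hh : DifferentiableAt ℝ h x) :
    fderiv ℝ (fun y => dot3 (f y) (cross3 (g y) (h y))) x v =
      dot3 (fderiv ℝ f x v) (cross3 (g x) (h x)) +
      dot3 (f x) (cross3 (fderiv ℝ g x v) (h x)) +
      dot3 (f x) (cross3 (g x) (fderiv ℝ h x v)) := by
  have hfi := fun i => diffAt_comp3 hf i
  have hgi := fun i => diffAt_comp3 hg i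
  have hhi := fun i => diffAt_comp3 hh i
  have e : (fun y => dot3 (f y) (cross3 (g y) (h y))) = fun y =>
      (f y 0 * g y 1 * h y 2 - f y 0 * g y 2 * h y 1) +
      (f y 1 * g y 2 * h y 0 - f y 1 * g y 0 * h y 2) +
      (f y 2 * g y 0 * h y 1 - f y 2 * g y 1 * h y 0) := by
    funext y; simp [dot3, cross3]; ring
  rw [e]
  have d1 : DifferentiableAt ℝ (fun y => f y 0 * g y 1 * h y 2) x :=
    ((hfi 0).mul (hgi 1)).mul (hhi 2)
  have d2 : DifferentiableAt ℝ (fun y => f y 0 * g y 2 * h y 1) x :=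
    ((hfi 0).mul (hgi 2)).mul (hhi 1)
  have d3 : DifferentiableAt ℝ (fun y => f y 1 * g y 2 * h y 0) x :=
    ((hfi 1).mul (hgi 2)).mul (hhi 0)
  have d4 : DifferentiableAt ℝ (fun y => f y 1 * g y 0 * h y 2) x :=
    ((hfi 1).mul (hgi 0)).mul (hhi 2)
  have d5 : DifferentiableAt ℝ (fun y => f y 2 * g y 0 * h y 1) x :=
    ((hfi 2).mul (hgi 0)).mul (hhi 1)
  have d6 : DifferentiableAt ℝ (fun y => f y 2 * g y 1 * h y 0) x :=
    ((hfi 2).mul (hgi 1)).mul (hhi 0)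
  rw [pdv_add v (u := fun y => f y 0 * g y 1 * h y 2 - f y 0 * g y 2 * h y 1 +
        (f y 1 * g y 2 * h y 0 - f y 1 * g y 0 * h y 2))
        (w := fun y => f y 2 * g y 0 * h y 1 - f y 2 * g y 1 * h y 0)
        ((d1.sub d2).add (d3.sub d4)) (d5.sub d6),
      pdv_add v (u := fun y => f y 0 * g y 1 * h y 2 - f y 0 * g y 2 * h y 1)
        (w := fun y => f y 1 * g y 2 * h y 0 - f y 1 * g y 0 * h y 2) (d1.sub d2) (d3.sub d4),
      pdv_sub v d1 d2, pdv_sub v d3 d4, pdv_sub v d5 d6,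
      pdv_mul3 v (hfi 0) (hgi 1) (hhi 2), pdv_mul3 v (hfi 0) (hgi 2) (hhi 1),
      pdv_mul3 v (hfi 1) (hgi 2) (hhi 0), pdv_mul3 v (hfi 1) (hgi 0) (hhi 2),
      pdv_mul3 v (hfi 2) (hgi 0) (hhi 1), pdv_mul3 v (hfi 2) (hgi 1) (hhi 0)]
  simp only [pd_comp3 v hf, pd_comp3 v hg, pd_comp3 v hh]
  simp [dot3, cross3]; ring

lemma clairaut3 {f : ℝ × ℝ → V3} {x : ℝ × ℝ} (hf : ContDiffAt ℝ (⊤ : ℕ∞) f x) :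
    fderiv ℝ (fun y => fderiv ℝ f y (0, 1)) x (1, 0) =
    fderiv ℝ (fun y => fderiv ℝ f y (1, 0)) x (0, 1) := by
  have hsym : IsSymmSndFDerivAt ℝ f x := hf.isSymmSndFDerivAt (by simp; exact WithTop.coe_le_coe.2 le_top)
  have hd : DifferentiableAt ℝ (fderiv ℝ f) x :=
    (hf.fderiv_right ((by exact WithTop.coe_le_coe.2 le_top) : (1 : WithTop ℕ∞) + 1 ≤ _)).differentiableAt one_ne_zero
  have h1 : ∀ w : ℝ × ℝ, fderiv ℝ (fun y => fderiv ℝ f y w) x =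
      (fderiv ℝ (fderiv ℝ f) x).flip w := by
    intro w
    have := fderiv_clm_apply hd (differentiableAt_const w)
    simpa using this
  rw [h1, h1]
  exact hsym (1, 0) (0, 1)

lemma deriv_cubic (c0 c1 c2 c3 : ℝ) :
    deriv (fun t : ℝ => c0 + c1 * t + c2 * t ^ 2 + c3 * t ^ 3) 0 = c1 := by
  have h : HasDerivAt (fun t : ℝ => c0 + c1 * t + c2 * t ^ 2 + c3 * t ^ 3)
      (c1 + c2 * (2 * 0 ^ 1) + c3 * (3 * 0 ^ 2)) 0 := by
    have h1 : HasDerivAt (fun t : ℝ => c0 + c1 * t) c1 0 := by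
      simpa using ((hasDerivAt_id (0 : ℝ)).const_mul c1).const_add c0
    exact (h1.add ((hasDerivAt_pow 2 (0:ℝ)).const_mul c2)).add
      ((hasDerivAt_pow 3 (0:ℝ)).const_mul c3)
  have := h.deriv
  simpa using this

lemma cdAt_comp3 {f : ℝ × ℝ → V3} {x : ℝ × ℝ} (hf : ContDiffAt ℝ (⊤ : ℕ∞) f x) (i : Fin 3) :
    ContDiffAt ℝ (⊤ : ℕ∞) (fun y => f y i) x := contDiffAt_pi.1 hf i

lemma cdAt_cross {f g : ℝ × ℝ → V3} {x : ℝ × ℝ} (hf : ContDiffAt ℝ (⊤ : ℕ∞) f x)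
    (hg : ContDiffAt ℝ (⊤ : ℕ∞) g x) : ContDiffAt ℝ (⊤ : ℕ∞) (fun y => cross3 (f y) (g y)) x := by
  rw [contDiffAt_pi]
  intro i
  fin_cases i
  · exact ((cdAt_comp3 hf 1).mul (cdAt_comp3 hg 2)).sub ((cdAt_comp3 hf 2).mul (cdAt_comp3 hg 1))
  · exact ((cdAt_comp3 hf 2).mul (cdAt_comp3 hg 0)).sub ((cdAt_comp3 hf 0).mul (cdAt_comp3 hg 2))
  · exact ((cdAt_comp3 hf 0).mul (cdAt_comp3 hg 1)).sub ((cdAt_comp3 hf 1).mul (cdAt_comp3 hg 0))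

lemma cdAt_dot {f g : ℝ × ℝ → V3} {x : ℝ × ℝ} (hf : ContDiffAt ℝ (⊤ : ℕ∞) f x)
    (hg : ContDiffAt ℝ (⊤ : ℕ∞) g x) : ContDiffAt ℝ (⊤ : ℕ∞) (fun y => dot3 (f y) (g y)) x :=
  (((cdAt_comp3 hf 0).mul (cdAt_comp3 hg 0)).add
    ((cdAt_comp3 hf 1).mul (cdAt_comp3 hg 1))).add ((cdAt_comp3 hf 2).mul (cdAt_comp3 hg 2))

theorem stmt_8
    (U : Set (ℝ × ℝ)) (hU : IsOpen U)
    (r : ℝ × ℝ → V3) (hr : ContDiffOn ℝ (⊤ : ℕ∞) r U)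
    (hne1 : ∀ x ∈ U, pd1 r x ≠ 0) (hne2 : ∀ x ∈ U, pd2 r x ≠ 0)
    (horth : ∀ x ∈ U, dot3 (pd1 r x) (pd2 r x) = 0)
    (κ₁ κ₂ : ℝ × ℝ → ℝ) (hκ₁ : ContDiffOn ℝ (⊤ : ℕ∞) κ₁ U) (hκ₂ : ContDiffOn ℝ (⊤ : ℕ∞) κ₂ U)
    (hN1 : ∀ x ∈ U, pd1 (NN r) x = (-κ₁ x) • pd1 r x)
    (hN2 : ∀ x ∈ U, pd2 (NN r) x = (-κ₂ x) • pd2 r x)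
    (v₁ v₂ v_n : ℝ × ℝ → ℝ)
    (hv₁ : ContDiffOn ℝ (⊤ : ℕ∞) v₁ U) (hv₂ : ContDiffOn ℝ (⊤ : ℕ∞) v₂ U) (hvn : ContDiffOn ℝ (⊤ : ℕ∞) v_n U)
 :
    ∀ x ∈ U,
      deriv (fun t => dot3 (Rt r (Vfield r v₁ v₂ v_n) t x)
        (cross3 (pd1 (Rt r (Vfield r v₁ v₂ v_n) t) x)
          (pd2 (Rt r (Vfield r v₁ v₂ v_n) t) x))) 0 =
      (3 * v_n x +
        sdiv r (fun y => -(v_n y) * dot3 (r y) (e₁ r y) + dot3 (r y) (NN r y) * v₁ y)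
          (fun y => -(v_n y) * dot3 (r y) (e₂ r y) + dot3 (r y) (NN r y) * v₂ y) x) * (A₁ r x * A₂ r x) := by
  intro x hx
  set Vf := Vfield r v₁ v₂ v_n with hVfdef
  have hmem := hU.mem_nhds hx
  -- basic positivity facts
  have hA1pos : ∀ y ∈ U, 0 < A₁ r y := fun y hy =>
    Real.sqrt_pos.2 (dot3_self_pos (hne1 y hy))
  have hA2pos : ∀ y ∈ U, 0 < A₂ r y := fun y hy =>
    Real.sqrt_pos.2 (dot3_self_pos (hne2 y hy))
  have hA1sq : ∀ y ∈ U, (A₁ r y) ^ 2 = dot3 (pd1 r y) (pd1 r y) := fun y hy =>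
    Real.sq_sqrt (dot3_self_pos (hne1 y hy)).le
  have hA2sq : ∀ y ∈ U, (A₂ r y) ^ 2 = dot3 (pd2 r y) (pd2 r y) := fun y hy =>
    Real.sq_sqrt (dot3_self_pos (hne2 y hy)).le
  -- pointwise identities on U
  have key1 : ∀ y ∈ U,
      (-(v_n y) * dot3 (r y) (e₁ r y) + dot3 (r y) (NN r y) * v₁ y) * A₂ r y =
      dot3 (r y) (cross3 (Vf y) (pd2 r y)) := by
    intro y hy
    simp only [hVfdef, Vfield, NN, e₁, e₂]
    exact alg1 (r y) (pd1 r y) (pd2 r y) (v₁ y) (v₂ y) (v_n y) (A₁ r y) (A₂ r y)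
      (hA1pos y hy).ne' (hA2pos y hy).ne' (hA1sq y hy) (hA2sq y hy) (horth y hy)
  have key2 : ∀ y ∈ U,
      (-(v_n y) * dot3 (r y) (e₂ r y) + dot3 (r y) (NN r y) * v₂ y) * A₁ r y =
      dot3 (r y) (cross3 (pd1 r y) (Vf y)) := by
    intro y hy
    simp only [hVfdef, Vfield, NN, e₁, e₂]
    exact alg2 (r y) (pd1 r y) (pd2 r y) (v₁ y) (v₂ y) (v_n y) (A₁ r y) (A₂ r y)
      (hA1pos y hy).ne' (hA2pos y hy).ne' (hA1sq y hy) (hA2sq y hy) (horth y hy)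
  -- smoothness at x
  have hrx : ContDiffAt ℝ (⊤ : ℕ∞) r x := (hr x hx).contDiffAt hmem
  have hp1c : ContDiffAt ℝ (⊤ : ℕ∞) (pd1 r) x := by
    have := (hrx.fderiv_right ((by exact_mod_cast le_top) : ((⊤ : ℕ∞) : WithTop ℕ∞) + 1 ≤ _)).clm_apply
      (contDiffAt_const (c := ((1 : ℝ), (0 : ℝ))))
    exact this
  have hp2c : ContDiffAt ℝ (⊤ : ℕ∞) (pd2 r) x := by
    have := (hrx.fderiv_right ((by exact_mod_cast le_top) : ((⊤ : ℕ∞) : WithTop ℕ∞) + 1 ≤ _)).clm_apply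
      (contDiffAt_const (c := ((0 : ℝ), (1 : ℝ))))
    exact this
  have hA1c : ContDiffAt ℝ (⊤ : ℕ∞) (A₁ r) x := by
    have hd : ContDiffAt ℝ (⊤ : ℕ∞) (fun y => dot3 (pd1 r y) (pd1 r y)) x := cdAt_dot hp1c hp1c
    exact hd.sqrt (dot3_self_pos (hne1 x hx)).ne'
  have hA2c : ContDiffAt ℝ (⊤ : ℕ∞) (A₂ r) x := by
    have hd : ContDiffAt ℝ (⊤ : ℕ∞) (fun y => dot3 (pd2 r y) (pd2 r y)) x := cdAt_dot hp2c hp2c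
    exact hd.sqrt (dot3_self_pos (hne2 x hx)).ne'
  have he1c : ContDiffAt ℝ (⊤ : ℕ∞) (e₁ r) x := (hA1c.inv (hA1pos x hx).ne').smul hp1c
  have he2c : ContDiffAt ℝ (⊤ : ℕ∞) (e₂ r) x := (hA2c.inv (hA2pos x hx).ne').smul hp2c
  have hNNc : ContDiffAt ℝ (⊤ : ℕ∞) (NN r) x := cdAt_cross he1c he2c
  have hv1x : ContDiffAt ℝ (⊤ : ℕ∞) v₁ x := (hv₁ x hx).contDiffAt hmem
  have hv2x : ContDiffAt ℝ (⊤ : ℕ∞) v₂ x := (hv₂ x hx).contDiffAt hmem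
  have hvnx : ContDiffAt ℝ (⊤ : ℕ∞) v_n x := (hvn x hx).contDiffAt hmem
  have hVfc : ContDiffAt ℝ (⊤ : ℕ∞) Vf x := ((hv1x.smul he1c).add (hv2x.smul he2c)).add
    (hvnx.smul hNNc)
  have hrd : DifferentiableAt ℝ r x := hrx.differentiableAt (by simp)
  have hVfd : DifferentiableAt ℝ Vf x := hVfc.differentiableAt (by simp)
  have hp1d : DifferentiableAt ℝ (pd1 r) x := hp1c.differentiableAt (by simp)
  have hp2d : DifferentiableAt ℝ (pd2 r) x := hp2c.differentiableAt (by simp)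
  -- abbreviations
  set a := pd1 r x with ha
  set b := pd2 r x with hb
  set w := Vf x with hw
  set P := pd1 Vf x with hP
  set Q := pd2 Vf x with hQ
  -- derivatives of the deformed surface
  have hRt1 : ∀ t : ℝ, pd1 (Rt r Vf t) x = a + t • P := by
    intro t
    show fderiv ℝ (fun y => r y + t • Vf y) x (1, 0) = _
    rw [fderiv_fun_add (g := fun y => t • Vf y) hrd (hVfd.const_smul t), fderiv_fun_const_smul hVfd t]
    simp [ha, hP, pd1]
  have hRt2 : ∀ t : ℝ, pd2 (Rt r Vf t) x = b + t • Q := by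
    intro t
    show fderiv ℝ (fun y => r y + t • Vf y) x (0, 1) = _
    rw [fderiv_fun_add (g := fun y => t • Vf y) hrd (hVfd.const_smul t), fderiv_fun_const_smul hVfd t]
    simp [hb, hQ, pd2]
  -- the function of t is an explicit cubic
  have hfun : (fun t => dot3 (Rt r Vf t x)
      (cross3 (pd1 (Rt r Vf t) x) (pd2 (Rt r Vf t) x))) =
      fun t => dot3 (r x) (cross3 a b) +
        (dot3 w (cross3 a b) + dot3 (r x) (cross3 P b) + dot3 (r x) (cross3 a Q)) * t +
        (dot3 w (cross3 P b) + dot3 w (cross3 a Q) + dot3 (r x) (cross3 P Q)) * t ^ 2 +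
        dot3 w (cross3 P Q) * t ^ 3 := by
    funext t
    rw [show Rt r Vf t x = r x + t • Vf x from rfl, hRt1 t, hRt2 t]
    simp only [dot3, cross3_c0, cross3_c1, cross3_c2, Pi.add_apply, Pi.smul_apply,
      smul_eq_mul, ← hw]
    ring
  rw [hfun, deriv_cubic]
  -- the divergence terms
  have hEq1 : (fun y => (-(v_n y) * dot3 (r y) (e₁ r y) + dot3 (r y) (NN r y) * v₁ y) *
      A₂ r y) =ᶠ[nhds x] (fun y => dot3 (r y) (cross3 (Vf y) (pd2 r y))) :=
    Filter.eventuallyEq_of_mem hmem (fun y hy => key1 y hy)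
  have hEq2 : (fun y => (-(v_n y) * dot3 (r y) (e₂ r y) + dot3 (r y) (NN r y) * v₂ y) *
      A₁ r y) =ᶠ[nhds x] (fun y => dot3 (r y) (cross3 (pd1 r y) (Vf y))) :=
    Filter.eventuallyEq_of_mem hmem (fun y hy => key2 y hy)
  have hpd1f : pd1 (fun y => (-(v_n y) * dot3 (r y) (e₁ r y) + dot3 (r y) (NN r y) * v₁ y) *
      A₂ r y) x = dot3 a (cross3 w b) + dot3 (r x) (cross3 P b) +
        dot3 (r x) (cross3 w (pd1 (pd2 r) x)) := by
    show fderiv ℝ _ x (1, 0) = _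
    rw [hEq1.fderiv_eq]
    exact pdv_dotcross (1, 0) hrd hVfd hp2d
  have hpd2f : pd2 (fun y => (-(v_n y) * dot3 (r y) (e₂ r y) + dot3 (r y) (NN r y) * v₂ y) *
      A₁ r y) x = dot3 b (cross3 a w) + dot3 (r x) (cross3 (pd2 (pd1 r) x) w) +
        dot3 (r x) (cross3 a Q) := by
    show fderiv ℝ _ x (0, 1) = _
    rw [hEq2.fderiv_eq]
    exact pdv_dotcross (0, 1) hrd hp1d hVfd
  have hcl : pd1 (pd2 r) x = pd2 (pd1 r) x := clairaut3 hrx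
  have halg3 : dot3 w (cross3 a b) = v_n x * (A₁ r x * A₂ r x) := by
    rw [hw, hVfdef]
    simp only [Vfield, NN, e₁, e₂]
    exact alg3 (pd1 r x) (pd2 r x) (v₁ x) (v₂ x) (v_n x) (A₁ r x) (A₂ r x)
      (hA1pos x hx).ne' (hA2pos x hx).ne' (hA1sq x hx) (hA2sq x hx) (horth x hx)
  have hAA : A₁ r x * A₂ r x ≠ 0 :=
    mul_ne_zero (hA1pos x hx).ne' (hA2pos x hx).ne'
  simp only [sdiv, hpd1f, hpd2f, hcl]
  rw [triple_swap1 a w b, triple_swap2 a w b,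
    triple_antisym (r x) w (pd2 (pd1 r) x), halg3]
  field_simp [(hA1pos x hx).ne', (hA2pos x hx).ne']
  ring
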